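/- Let X and Y be measurable spaces, J ⊆ X × Y a subset, and let μ and ν be probability measures on X and Y satisfying ν(J⁺(A')) ≥ μ(A') for every subset A' ⊆ X and μ(J⁻(B')) ≥ ν(B') for every subset B' ⊆ Y (measures evaluated via outer measure). Suppose B ⊆ Y is measurable, J⁻(B) ⊆ X is measurable, and 0 < ν(B) = μ(J⁻(B)) < 1. Then the pair (μ_B, ν_B) := ((1/ν(B))·μ|_{J⁻(B)}, (1/ν(B))·ν|_B) and the pair (μ_{Bᶜ}, ν_{Bᶜ}) := ((1/ν(Bᶜ))·μ|_{J⁻(B)ᶜ}, (1/ν(Bᶜ))·ν|_{Bᶜ}) are pairs of probability measures, and each pair again satisfies the same condition: ν_B(J⁺(A')) ≥ μ_B(A') and μ_B(J⁻(B')) ≥ ν_B(B') for all subsets A' ⊆ X and B' ⊆ Y, and likewise for (μ_{Bᶜ}, ν_{Bᶜ}). -/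

import Mathlib

open MeasureTheory Set ProbabilityTheory ENNReal

/-! Write `C := J⁻(B)`. Points outside `C` are only related to points outside `B`, so the
inequalities for the pairs restricted to `C, B` (from `J⁻`) and to `Cᶜ, Bᶜ` (from `J⁺`) are
immediate. The two remaining ones are dual to each other and use the saturation
`μ(C) = ν(B)`: for `A ⊆ C`, applying the condition to `A ∪ Cᶜ` gives
`μ(A) + μ(Cᶜ) ≤ ν(J⁺(A) ∩ B) + ν(Bᶜ)`, and `μ(Cᶜ) = ν(Bᶜ)` cancels. -/

namespace SetRel

variable {X Y : Type*}

lemma image_compl_preimage_subset_compl (J : SetRel X Y) (B : Set Y) :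
    J.image (J.preimage B)ᶜ ⊆ Bᶜ :=
  fun _ ⟨_, hx, hxy⟩ hy ↦ hx ⟨_, hy, hxy⟩

variable {J : SetRel X Y} {S : Set X} {T : Set Y}

lemma image_inter_union_compl_subset (hTS : J.preimage T ⊆ S) (A : Set X) :
    J.image (A ∩ S ∪ Sᶜ) ⊆ J.image A ∩ T ∪ Tᶜ := by
  rintro y ⟨x, hx, hxy⟩
  by_cases hy : y ∈ T
  · rcases hx with hx | hx
    · exact .inl ⟨⟨x, hx.1, hxy⟩, hy⟩
    · exact absurd (hTS ⟨y, hy, hxy⟩) hx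
  · exact .inr hy

variable [MeasurableSpace X] [MeasurableSpace Y] {μ : Measure X} {ν : Measure Y}

lemma measure_inter_le_measure_image_inter (hJ : ∀ A, μ A ≤ ν (J.image A))
    (hST : J.image S ⊆ T) (A : Set X) : μ (A ∩ S) ≤ ν (J.image A ∩ T) :=
  (hJ _).trans <| measure_mono fun _ ⟨x, ⟨hxA, hxS⟩, hxy⟩ ↦
    ⟨⟨x, hxA, hxy⟩, hST ⟨x, hxS, hxy⟩⟩

lemma measure_inter_le_measure_image_inter_of_compl (hJ : ∀ A, μ A ≤ ν (J.image A))
    (hS : MeasurableSet S) (hTS : J.preimage T ⊆ S) (hmass : ν Tᶜ ≤ μ Sᶜ)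
    (hfin : μ Sᶜ ≠ ∞) (A : Set X) : μ (A ∩ S) ≤ ν (J.image A ∩ T) := by
  refine (ENNReal.add_le_add_iff_right hfin).mp ?_
  calc μ (A ∩ S) + μ Sᶜ
      = μ (A ∩ S ∪ Sᶜ) :=
        (measure_union (disjoint_compl_right.mono_left inter_subset_right) hS.compl).symm
    _ ≤ ν (J.image (A ∩ S ∪ Sᶜ)) := hJ _
    _ ≤ ν (J.image A ∩ T ∪ Tᶜ) := measure_mono (image_inter_union_compl_subset hTS A)
    _ ≤ ν (J.image A ∩ T) + ν Tᶜ := measure_union_le _ _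
    _ ≤ ν (J.image A ∩ T) + μ Sᶜ := by gcongr

end SetRel

namespace MeasureTheory.Measure

variable {X Y : Type*} [MeasurableSpace X] [MeasurableSpace Y] {μ : Measure X}
  {ν : Measure Y} {S A : Set X} {T A' : Set Y}

lemma smul_restrict_apply_le_smul_restrict_apply (c : ℝ≥0∞) (hS : MeasurableSet S)
    (hT : MeasurableSet T) (h : μ (A ∩ S) ≤ ν (A' ∩ T)) :
    (c • μ.restrict S) A ≤ (c • ν.restrict T) A' := by
  simp only [smul_apply, restrict_apply' hS, restrict_apply' hT, smul_eq_mul]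
  gcongr

lemma isProbabilityMeasure_inv_smul_restrict [IsFiniteMeasure μ] {c : ℝ≥0∞} (h : μ S = c)
    (hc : c ≠ 0) : IsProbabilityMeasure (c⁻¹ • μ.restrict S) :=
  h ▸ cond_isProbabilityMeasure (h ▸ hc)

end MeasureTheory.Measure

open SetRel Measure

/-- **Lemma (Suhr, Lemma 3.1, second case).** If probability measures `μ`, `ν` satisfy
`ν(J⁺(A')) ≥ μ(A')` and `μ(J⁻(B')) ≥ ν(B')` for all subsets, and `B` is measurable with
`J⁻(B)` measurable and `0 < ν(B) = μ(J⁻(B)) < 1`, then the renormalized restricted pairs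
`(μ_B, ν_B)` and `(μ_{Bᶜ}, ν_{Bᶜ})` are probability measures satisfying the same
inequalities. -/
theorem restricted_pairs_satisfy_condition_of_saturated_set'
    {X Y : Type*} [MeasurableSpace X] [MeasurableSpace Y]
    (J : Set (X × Y)) (μ : Measure X) (ν : Measure Y)
    [IsProbabilityMeasure μ] [IsProbabilityMeasure ν]
    (hν : ∀ A' : Set X, μ A' ≤ ν {y | ∃ x ∈ A', (x, y) ∈ J})
    (hμ : ∀ B' : Set Y, ν B' ≤ μ {x | ∃ y ∈ B', (x, y) ∈ J})
    (B : Set Y) (hB : MeasurableSet B)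
    (hJB : MeasurableSet {x | ∃ y ∈ B, (x, y) ∈ J})
    (h0 : 0 < ν B) (heq : ν B = μ {x | ∃ y ∈ B, (x, y) ∈ J}) (h1 : ν B < 1) :
    (IsProbabilityMeasure ((ν B)⁻¹ • μ.restrict {x | ∃ y ∈ B, (x, y) ∈ J}) ∧
     IsProbabilityMeasure ((ν B)⁻¹ • ν.restrict B) ∧
     (∀ A' : Set X,
        ((ν B)⁻¹ • μ.restrict {x | ∃ y ∈ B, (x, y) ∈ J}) A' ≤
          ((ν B)⁻¹ • ν.restrict B) {y | ∃ x ∈ A', (x, y) ∈ J}) ∧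
     (∀ B' : Set Y,
        ((ν B)⁻¹ • ν.restrict B) B' ≤
          ((ν B)⁻¹ • μ.restrict {x | ∃ y ∈ B, (x, y) ∈ J}) {x | ∃ y ∈ B', (x, y) ∈ J})) ∧
    (IsProbabilityMeasure ((ν Bᶜ)⁻¹ • μ.restrict {x | ∃ y ∈ B, (x, y) ∈ J}ᶜ) ∧
     IsProbabilityMeasure ((ν Bᶜ)⁻¹ • ν.restrict Bᶜ) ∧
     (∀ A' : Set X,
        ((ν Bᶜ)⁻¹ • μ.restrict {x | ∃ y ∈ B, (x, y) ∈ J}ᶜ) A' ≤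
          ((ν Bᶜ)⁻¹ • ν.restrict Bᶜ) {y | ∃ x ∈ A', (x, y) ∈ J}) ∧
     (∀ B' : Set Y,
        ((ν Bᶜ)⁻¹ • ν.restrict Bᶜ) B' ≤
          ((ν Bᶜ)⁻¹ • μ.restrict {x | ∃ y ∈ B, (x, y) ∈ J}ᶜ) {x | ∃ y ∈ B', (x, y) ∈ J})) := by
  set C : Set X := {x | ∃ y ∈ B, (x, y) ∈ J}
  have hCc : μ Cᶜ = ν Bᶜ := by rw [prob_compl_eq_one_sub hJB, prob_compl_eq_one_sub hB, heq]
  have hBc : ν Bᶜ ≠ 0 := by rw [prob_compl_eq_one_sub hB]; exact (tsub_pos_of_lt h1).ne'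
  have hCB : SetRel.image J Cᶜ ⊆ Bᶜ := image_compl_preimage_subset_compl J B
  refine ⟨⟨isProbabilityMeasure_inv_smul_restrict heq.symm h0.ne',
      isProbabilityMeasure_inv_smul_restrict rfl h0.ne', fun A ↦ ?_, fun B' ↦ ?_⟩,
    ⟨isProbabilityMeasure_inv_smul_restrict hCc hBc,
      isProbabilityMeasure_inv_smul_restrict rfl hBc, fun A ↦ ?_, fun B' ↦ ?_⟩⟩
  · exact smul_restrict_apply_le_smul_restrict_apply _ hJB hB <|
      measure_inter_le_measure_image_inter_of_compl hν hJB subset_rfl hCc.ge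
        (measure_ne_top _ _) A
  · exact smul_restrict_apply_le_smul_restrict_apply _ hB hJB <|
      measure_inter_le_measure_image_inter (J := SetRel.inv J) hμ subset_rfl B'
  · exact smul_restrict_apply_le_smul_restrict_apply _ hJB.compl hB.compl <|
      measure_inter_le_measure_image_inter hν hCB A
  · refine smul_restrict_apply_le_smul_restrict_apply _ hB.compl hJB.compl <|
      measure_inter_le_measure_image_inter_of_compl (J := SetRel.inv J) hμ hB.compl hCB ?_
        (measure_ne_top _ _) B'
    rw [compl_compl, compl_compl, heq]
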